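/- Let μ and ν be probability measures on ℝ^d with ∫ ‖x‖² dμ(x) < ∞ and ∫ ‖y‖² dν(y) < ∞, and let m_μ = ∫ x dμ(x) and m_ν = ∫ y dν(y) be their means. Then the squared quadratic transport cost decomposes as: inf over couplings γ of μ and ν of ∫ ‖x − y‖² dγ(x, y) = ‖m_μ − m_ν‖² + inf over t ∈ ℝ^d of (inf over couplings γ' of the translated measure (x ↦ x + t)_#μ and ν of ∫ ‖x − y‖² dγ'(x, y)); moreover the inner infimum over t is attained at t = m_ν − m_μ. -/
import Mathlib

open MeasureTheory RealInnerProductSpace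

namespace SqTransport

variable {d : ℕ}

local notation "E" => EuclideanSpace ℝ (Fin d)

/-- The set of costs of couplings of `α` and `β`. -/
def cpl (α β : Measure E) : Set ℝ :=
  {c : ℝ | ∃ γ : Measure (E × E),
      IsProbabilityMeasure γ ∧ γ.map Prod.fst = α ∧ γ.map Prod.snd = β ∧
      c = ∫ p, ‖p.1 - p.2‖ ^ 2 ∂γ}

lemma hcont2 : Continuous (fun x : E => ‖x‖ ^ 2) := continuous_norm.pow 2

lemma integrable_id_of_sq {α : Measure E} [IsProbabilityMeasure α]
    (h2 : Integrable (fun x => ‖x‖ ^ 2) α) : Integrable (fun x : E => x) α := by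
  have hb : Integrable (fun x : E => ‖x‖ ^ 2 + 1) α := h2.add (integrable_const 1)
  refine hb.mono' measurable_id'.aestronglyMeasurable
    (Filter.Eventually.of_forall fun x => ?_)
  nlinarith [sq_nonneg (‖x‖ - 1), norm_nonneg x]

lemma cpl_nonempty (α β : Measure E) [IsProbabilityMeasure α] [IsProbabilityMeasure β] :
    (cpl α β).Nonempty := by
  refine ⟨_, α.prod β, inferInstance, ?_, ?_, rfl⟩
  · exact Measure.fst_prod
  · exact Measure.snd_prod

lemma cpl_nonneg {α β : Measure E} {c : ℝ} (hc : c ∈ cpl α β) : 0 ≤ c := by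
  obtain ⟨γ, _, _, _, rfl⟩ := hc
  exact integral_nonneg fun p => by positivity

lemma cpl_bddBelow (α β : Measure E) : BddBelow (cpl α β) :=
  ⟨0, fun _ hc => cpl_nonneg hc⟩

lemma map_mean (α : Measure E) [IsProbabilityMeasure α]
    (hα2 : Integrable (fun x => ‖x‖ ^ 2) α) (t : E) :
    ∫ x, x ∂(α.map (fun x => x + t)) = (∫ x, x ∂α) + t := by
  rw [integral_map (measurable_id'.add_const t).aemeasurable measurable_id'.aestronglyMeasurable,
    integral_add (integrable_id_of_sq hα2) (integrable_const t), integral_const]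
  simp

lemma map_sq (α : Measure E) [IsProbabilityMeasure α]
    (hα2 : Integrable (fun x => ‖x‖ ^ 2) α) (t : E) :
    Integrable (fun x => ‖x‖ ^ 2) (α.map (fun x => x + t)) := by
  rw [integrable_map_measure hcont2.aestronglyMeasurable
    (measurable_id'.add_const t).aemeasurable]
  have hb : Integrable (fun x : E => 2 * ‖x‖ ^ 2 + 2 * ‖t‖ ^ 2) α :=
    (hα2.const_mul 2).add (integrable_const _)
  refine hb.mono'
    (((continuous_id.add continuous_const).norm.pow 2).aestronglyMeasurable)
    (Filter.Eventually.of_forall fun x => ?_)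
  simp only [Function.comp_apply]
  rw [Real.norm_eq_abs, abs_of_nonneg (by positivity)]
  have h1 : ‖x + t‖ ^ 2 ≤ (‖x‖ + ‖t‖) ^ 2 :=
    pow_le_pow_left₀ (norm_nonneg _) (norm_add_le x t) 2
  nlinarith [sq_nonneg (‖x‖ - ‖t‖)]

lemma map_add_add (α : Measure E) (t s : E) :
    (α.map (fun x => x + t)).map (fun x => x + s) = α.map (fun x => x + (t + s)) := by
  rw [Measure.map_map (measurable_id'.add_const s) (measurable_id'.add_const t)]
  congr 1
  funext x
  simp [Function.comp, add_assoc]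

lemma shift_mem {α β : Measure E} [IsProbabilityMeasure α] [IsProbabilityMeasure β]
    (hα2 : Integrable (fun x => ‖x‖ ^ 2) α) (hβ2 : Integrable (fun y => ‖y‖ ^ 2) β)
    (s : E) {c : ℝ} (hc : c ∈ cpl α β) :
    c + (2 * ⟪s, (∫ x, x ∂α) - ∫ y, y ∂β⟫ + ‖s‖ ^ 2) ∈ cpl (α.map (fun x => x + s)) β := by
  obtain ⟨γ, hγp, hf, hsnd', rfl⟩ := hc
  haveI := hγp
  have hmT : Measurable (fun p : E × E => (p.1 + s, p.2)) :=
    (measurable_fst.add_const s).prodMk measurable_snd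
  have hcostc : Continuous (fun p : E × E => ‖p.1 - p.2‖ ^ 2) :=
    ((continuous_fst.sub continuous_snd).norm.pow 2)
  have hfst : Integrable (fun p : E × E => p.1) γ := by
    have h := (integrable_map_measure measurable_id'.aestronglyMeasurable
      measurable_fst.aemeasurable).mp (by rw [hf]; exact integrable_id_of_sq hα2)
    exact h
  have hsnd : Integrable (fun p : E × E => p.2) γ := by
    have h := (integrable_map_measure measurable_id'.aestronglyMeasurable
      measurable_snd.aemeasurable).mp (by rw [hsnd']; exact integrable_id_of_sq hβ2)
    exact h
  have hsq1 : Integrable (fun p : E × E => ‖p.1‖ ^ 2) γ := by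
    have h := (integrable_map_measure hcont2.aestronglyMeasurable
      measurable_fst.aemeasurable).mp (by rw [hf]; exact hα2)
    exact h
  have hsq2 : Integrable (fun p : E × E => ‖p.2‖ ^ 2) γ := by
    have h := (integrable_map_measure hcont2.aestronglyMeasurable
      measurable_snd.aemeasurable).mp (by rw [hsnd']; exact hβ2)
    exact h
  have hcost : Integrable (fun p : E × E => ‖p.1 - p.2‖ ^ 2) γ := by
    have hb : Integrable (fun p : E × E => 2 * (‖p.1‖ ^ 2 + ‖p.2‖ ^ 2)) γ :=
      (hsq1.add hsq2).const_mul 2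
    refine hb.mono' hcostc.aestronglyMeasurable
      (Filter.Eventually.of_forall fun p => ?_)
    rw [Real.norm_eq_abs, abs_of_nonneg (by positivity)]
    have h1 : ‖p.1 - p.2‖ ^ 2 ≤ (‖p.1‖ + ‖p.2‖) ^ 2 :=
      pow_le_pow_left₀ (norm_nonneg _) (norm_sub_le p.1 p.2) 2
    nlinarith [sq_nonneg (‖p.1‖ - ‖p.2‖)]
  have hdiff : Integrable (fun p : E × E => p.1 - p.2) γ := hfst.sub hsnd
  have hinner : Integrable (fun p : E × E => ⟪s, p.1 - p.2⟫) γ := hdiff.const_inner s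
  have h1 : ∫ p, p.1 ∂γ = ∫ x, x ∂α := by
    rw [← hf, integral_map measurable_fst.aemeasurable measurable_id'.aestronglyMeasurable]
  have h2 : ∫ p, p.2 ∂γ = ∫ y, y ∂β := by
    rw [← hsnd', integral_map measurable_snd.aemeasurable measurable_id'.aestronglyMeasurable]
  have hmean : ∫ p, (p.1 - p.2) ∂γ = (∫ x, x ∂α) - ∫ y, y ∂β := by
    rw [integral_sub hfst hsnd, h1, h2]
  refine ⟨γ.map (fun p : E × E => (p.1 + s, p.2)),
    Measure.isProbabilityMeasure_map hmT.aemeasurable, ?_, ?_, ?_⟩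
  · rw [Measure.map_map measurable_fst hmT,
      show (Prod.fst ∘ fun p : E × E => (p.1 + s, p.2)) =
        (fun x : E => x + s) ∘ Prod.fst from rfl,
      ← Measure.map_map (measurable_id'.add_const s) measurable_fst, hf]
  · rw [Measure.map_map measurable_snd hmT]; exact hsnd'
  · rw [integral_map hmT.aemeasurable hcostc.aestronglyMeasurable]
    have expand : ∀ p : E × E, ‖(p.1 + s) - p.2‖ ^ 2
        = ‖p.1 - p.2‖ ^ 2 + (2 * ⟪s, p.1 - p.2⟫ + ‖s‖ ^ 2) := by
      intro p
      rw [add_sub_right_comm, norm_add_sq_real, real_inner_comm]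
      ring
    simp only [expand]
    have hig : Integrable (fun p : E × E => 2 * ⟪s, p.1 - p.2⟫ + ‖s‖ ^ 2) γ :=
      (hinner.const_mul 2).add (integrable_const _)
    rw [integral_add hcost hig,
      integral_add (hinner.const_mul 2) (integrable_const _),
      integral_const_mul, integral_inner hdiff, hmean, integral_const]
    simp [measure_univ]

end SqTransport

open SqTransport

theorem squared_transport_cost_mean_translation_decomposition
    (d : ℕ) (μ ν : Measure (EuclideanSpace ℝ (Fin d)))
    (hμp : IsProbabilityMeasure μ) (hνp : IsProbabilityMeasure ν)
    (hμ2 : Integrable (fun x => ‖x‖ ^ 2) μ) (hν2 : Integrable (fun y => ‖y‖ ^ 2) ν)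
    (mμ mν : EuclideanSpace ℝ (Fin d))
    (hmμ : mμ = ∫ x, x ∂μ) (hmν : mν = ∫ y, y ∂ν) :
    sInf {c : ℝ | ∃ γ : Measure (EuclideanSpace ℝ (Fin d) × EuclideanSpace ℝ (Fin d)),
          IsProbabilityMeasure γ ∧ γ.map Prod.fst = μ ∧ γ.map Prod.snd = ν ∧
          c = ∫ p, ‖p.1 - p.2‖ ^ 2 ∂γ}
        = ‖mμ - mν‖ ^ 2
          + ⨅ t : EuclideanSpace ℝ (Fin d),
              sInf {c : ℝ |
                ∃ γ' : Measure (EuclideanSpace ℝ (Fin d) × EuclideanSpace ℝ (Fin d)),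
                  IsProbabilityMeasure γ' ∧
                  γ'.map Prod.fst = μ.map (fun x => x + t) ∧ γ'.map Prod.snd = ν ∧
                  c = ∫ p, ‖p.1 - p.2‖ ^ 2 ∂γ'}
      ∧ sInf {c : ℝ |
            ∃ γ' : Measure (EuclideanSpace ℝ (Fin d) × EuclideanSpace ℝ (Fin d)),
              IsProbabilityMeasure γ' ∧
              γ'.map Prod.fst = μ.map (fun x => x + (mν - mμ)) ∧ γ'.map Prod.snd = ν ∧
              c = ∫ p, ‖p.1 - p.2‖ ^ 2 ∂γ'}
          = ⨅ t : EuclideanSpace ℝ (Fin d),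
              sInf {c : ℝ |
                ∃ γ' : Measure (EuclideanSpace ℝ (Fin d) × EuclideanSpace ℝ (Fin d)),
                  IsProbabilityMeasure γ' ∧
                  γ'.map Prod.fst = μ.map (fun x => x + t) ∧ γ'.map Prod.snd = ν ∧
                  c = ∫ p, ‖p.1 - p.2‖ ^ 2 ∂γ'} := by
  haveI := hμp; haveI := hνp
  set tstar : EuclideanSpace ℝ (Fin d) := mν - mμ with htstar
  set K : ℝ := ‖mμ - mν‖ ^ 2 with hK
  haveI : ∀ t : EuclideanSpace ℝ (Fin d),
      IsProbabilityMeasure (μ.map (fun x => x + t)) := fun t =>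
    Measure.isProbabilityMeasure_map (measurable_id'.add_const t).aemeasurable
  -- A : shift by tstar lowers cost by K
  have hA : ∀ c ∈ cpl μ ν, c - K ∈ cpl (μ.map (fun x => x + tstar)) ν := by
    intro c hc
    have h := shift_mem hμ2 hν2 tstar hc
    have hx : 2 * ⟪tstar, (∫ x, x ∂μ) - ∫ y, y ∂ν⟫ + ‖tstar‖ ^ 2 = -K := by
      rw [← hmμ, ← hmν, show mμ - mν = -(mν - mμ) from (neg_sub _ _).symm, ← htstar,
        inner_neg_right, real_inner_self_eq_norm_sq, hK, htstar, norm_sub_rev]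
      ring
    rwa [hx, ← sub_eq_add_neg] at h
  -- B : shift back raises cost by K
  have hB : ∀ c ∈ cpl (μ.map (fun x => x + tstar)) ν, c + K ∈ cpl μ ν := by
    intro c hc
    have h := shift_mem (map_sq μ hμ2 tstar) hν2 (-tstar) hc
    have hx : 2 * ⟪-tstar, (∫ x, x ∂(μ.map (fun x => x + tstar))) - ∫ y, y ∂ν⟫
        + ‖-tstar‖ ^ 2 = K := by
      rw [map_mean μ hμ2 tstar, ← hmμ, ← hmν, htstar]
      have : mμ + (mν - mμ) - mν = 0 := by abel
      rw [this, inner_zero_right, norm_neg, hK, norm_sub_rev mν mμ]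
      ring
    rw [hx] at h
    rwa [map_add_add, add_neg_cancel,
      show (fun x : EuclideanSpace ℝ (Fin d) => x + 0) = id from funext fun x => add_zero x,
      Measure.map_id] at h
  -- C : from any translate t, shifting to tstar does not increase cost
  have hC : ∀ (t : EuclideanSpace ℝ (Fin d)), ∀ c ∈ cpl (μ.map (fun x => x + t)) ν,
      c - ‖tstar - t‖ ^ 2 ∈ cpl (μ.map (fun x => x + tstar)) ν := by
    intro t c hc
    have h := shift_mem (map_sq μ hμ2 t) hν2 (tstar - t) hc
    have hx : 2 * ⟪tstar - t, (∫ x, x ∂(μ.map (fun x => x + t))) - ∫ y, y ∂ν⟫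
        + ‖tstar - t‖ ^ 2 = -‖tstar - t‖ ^ 2 := by
      rw [map_mean μ hμ2 t, ← hmμ, ← hmν, htstar]
      have : mμ + t - mν = -(mν - mμ - t) := by abel
      rw [this, inner_neg_right, show mν - mμ - t = tstar - t from by rw [htstar],
        real_inner_self_eq_norm_sq]
      ring
    rw [hx, ← sub_eq_add_neg] at h
    rwa [map_add_add, show t + (tstar - t) = tstar from by abel] at h
  have hne : ∀ t : EuclideanSpace ℝ (Fin d),
      (cpl (μ.map (fun x => x + t)) ν).Nonempty := fun t => cpl_nonempty _ _
  have hIpos : ∀ t : EuclideanSpace ℝ (Fin d),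
      (0:ℝ) ≤ sInf (cpl (μ.map (fun x => x + t)) ν) := fun t =>
    le_csInf (hne t) fun c hc => cpl_nonneg hc
  have hrange : BddBelow (Set.range fun t : EuclideanSpace ℝ (Fin d) =>
      sInf (cpl (μ.map (fun x => x + t)) ν)) := by
    refine ⟨0, ?_⟩
    rintro x ⟨t, rfl⟩
    exact hIpos t
  -- second conjunct
  have hsecond : sInf (cpl (μ.map (fun x => x + tstar)) ν)
      = ⨅ t : EuclideanSpace ℝ (Fin d), sInf (cpl (μ.map (fun x => x + t)) ν) := by
    refine le_antisymm ?_ ?_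
    · refine le_ciInf fun t => le_csInf (hne t) fun c hc => ?_
      have h := csInf_le (cpl_bddBelow _ _) (hC t c hc)
      have h0 : (0:ℝ) ≤ ‖tstar - t‖ ^ 2 := by positivity
      linarith
    · exact ciInf_le hrange tstar
  -- first conjunct
  have hfirst : sInf (cpl μ ν) = K + sInf (cpl (μ.map (fun x => x + tstar)) ν) := by
    have h1 : sInf (cpl μ ν) - K ≤ sInf (cpl (μ.map (fun x => x + tstar)) ν) := by
      refine le_csInf (hne tstar) fun c hc => ?_
      have := csInf_le (cpl_bddBelow μ ν) (hB c hc)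
      linarith
    have h2 : K + sInf (cpl (μ.map (fun x => x + tstar)) ν) ≤ sInf (cpl μ ν) := by
      refine le_csInf (cpl_nonempty μ ν) fun c hc => ?_
      have := csInf_le (cpl_bddBelow _ _) (hA c hc)
      linarith
    linarith
  constructor
  · show sInf (cpl μ ν)
        = K + ⨅ t : EuclideanSpace ℝ (Fin d), sInf (cpl (μ.map (fun x => x + t)) ν)
    rw [← hsecond]; exact hfirst
  · show sInf (cpl (μ.map (fun x => x + tstar)) ν)
        = ⨅ t : EuclideanSpace ℝ (Fin d), sInf (cpl (μ.map (fun x => x + t)) ν)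
    exact hsecond
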